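/- With h as defined (h(∅)=0, h(L) = 1 + max_{M ∈ S(L)} min{h(L∩M), h(L∩(M-1))} for L ≠ ∅, S(L) = {M : M ≠ L, 0 < |M| ≤ |L|}), the shift property (A3) holds: for all finite L ⊆ ℕ, h(L-1) ≤ h(L), where L-1 = {x-1 : x ∈ L, x ≥ 1}. -/
import Mathlib


open Finset

/-- `M - 1 = {m-1 : m ∈ M, m ≥ 1}`. -/
def shiftDown (M : Finset ℕ) : Finset ℕ := (M.filter (1 ≤ ·)).image (· - 1)

/-- `h` satisfies the recursion defining the height function of Mubayi–Rödl:
`h(∅) = 0` and, for `L ≠ ∅`,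
`h(L) = 1 + max_{M ∈ S(L)} min {h(L ∩ M), h(L ∩ (M-1))}` where
`S(L) = {M ⊆ ℕ finite : M ≠ L, 0 < |M| ≤ |L|}`. -/
def IsHeightRec (h : Finset ℕ → ℕ) : Prop :=
  h ∅ = 0 ∧ ∀ L : Finset ℕ, L ≠ ∅ →
    h L = 1 + sSup {k : ℕ | ∃ M : Finset ℕ, M ≠ L ∧ 0 < M.card ∧ M.card ≤ L.card ∧
      k = min (h (L ∩ M)) (h (L ∩ shiftDown M))}

lemma mem_shiftDown {M : Finset ℕ} {x : ℕ} : x ∈ shiftDown M ↔ x + 1 ∈ M := by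
  simp only [shiftDown, mem_image, mem_filter]
  constructor
  · rintro ⟨y, ⟨hy, h1⟩, rfl⟩
    have : y - 1 + 1 = y := Nat.succ_pred_eq_of_pos h1
    rwa [this]
  · intro hx
    exact ⟨x + 1, ⟨hx, by omega⟩, by omega⟩

lemma shiftDown_card_le (M : Finset ℕ) : (shiftDown M).card ≤ M.card :=
  le_trans card_image_le (card_filter_le _ _)

/-- The shift property (A3) of the height function: `h(L-1) ≤ h(L)`. -/
theorem stmt_10 (h : Finset ℕ → ℕ) (hh : IsHeightRec h) (L : Finset ℕ) :
    h (shiftDown L) ≤ h L := by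
  induction L using Finset.strongInduction with
  | _ L IH =>
  by_cases hE : shiftDown L = ∅
  · rw [hE, hh.1]; exact Nat.zero_le _
  have hLne : L ≠ ∅ := by
    rintro rfl
    exact hE (by ext x; simp [mem_shiftDown])
  rw [hh.2 _ hE, hh.2 _ hLne]
  apply Nat.add_le_add_left
  apply csSup_le'
  rintro k ⟨M, hMne, hMpos, hMcard, rfl⟩
  have hL'card : (shiftDown L).card ≤ L.card := shiftDown_card_le L
  -- bound for the big set
  have hBdd : BddAbove {k | ∃ N : Finset ℕ, N ≠ L ∧ 0 < N.card ∧ N.card ≤ L.card ∧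
      k = min (h (L ∩ N)) (h (L ∩ shiftDown N))} := by
    refine ⟨L.powerset.sup h, ?_⟩
    rintro k ⟨N, -, -, -, rfl⟩
    exact le_trans (min_le_left _ _)
      (Finset.le_sup (mem_powerset.mpr inter_subset_left))
  set M' := M.image (· + 1) with hM'def
  have hsdM' : shiftDown M' = M := by
    ext x
    simp [mem_shiftDown, hM'def, mem_image]
  have hM'card : M'.card = M.card :=
    card_image_of_injective _ (fun a b hab => by omega)
  have hM'neL : M' ≠ L := by
    intro hc
    exact hMne (by rw [← hsdM', hc])
  have hX1 : shiftDown (L ∩ M') = shiftDown L ∩ M := by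
    ext x
    simp [mem_shiftDown, mem_inter, hM'def, mem_image]
  have hX2 : shiftDown (L ∩ M) = shiftDown L ∩ shiftDown M := by
    ext x
    simp [mem_shiftDown, mem_inter]
  have hX1ss : L ∩ M' ⊂ L := by
    refine Finset.ssubset_iff_subset_ne.mpr ⟨inter_subset_left, ?_⟩
    intro hc
    have hsub : L ⊆ M' := by
      rw [← hc]; exact inter_subset_right
    exact hM'neL (Finset.eq_of_subset_of_card_le hsub (by omega)).symm
  have IH1 : h (shiftDown (L ∩ M')) ≤ h (L ∩ M') := IH _ hX1ss
  by_cases hC : L ∩ M = L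
  · -- then M = L
    have hLM : L ⊆ M := by rw [← hC]; exact inter_subset_right
    have hML : M = L := (Finset.eq_of_subset_of_card_le hLM (by omega)).symm
    have hk1 : min (h (shiftDown L ∩ M)) (h (shiftDown L ∩ shiftDown M))
        ≤ h (shiftDown (L ∩ M')) := by
      rw [hX1]; exact min_le_left _ _
    by_cases hX1e : L ∩ M' = ∅
    · have : shiftDown (L ∩ M') = ∅ := by
        rw [hX1e]; ext x; simp [mem_shiftDown]
      have h0 : h (shiftDown (L ∩ M')) = 0 := by rw [this, hh.1]
      have : min (h (shiftDown L ∩ M)) (h (shiftDown L ∩ shiftDown M)) = 0 := by omega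
      omega
    · -- use L ∩ M' itself as witness
      have hmem : (min (h (L ∩ (L ∩ M'))) (h (L ∩ shiftDown (L ∩ M')))) ∈
          {k | ∃ N : Finset ℕ, N ≠ L ∧ 0 < N.card ∧ N.card ≤ L.card ∧
          k = min (h (L ∩ N)) (h (L ∩ shiftDown N))} :=
        ⟨L ∩ M', hX1ss.ne, card_pos.mpr (nonempty_iff_ne_empty.mpr hX1e),
          card_le_card inter_subset_left, rfl⟩
      have e1 : L ∩ (L ∩ M') = L ∩ M' := by
        rw [inter_eq_right.mpr]; exact inter_subset_left
      have e2 : L ∩ shiftDown (L ∩ M') = shiftDown (L ∩ M') := by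
        rw [inter_eq_right.mpr]
        rw [hX1, hML]
        exact inter_subset_right
      refine le_trans ?_ (le_csSup hBdd hmem)
      rw [e1, e2]
      omega
  · have hX2ss : L ∩ M ⊂ L := Finset.ssubset_iff_subset_ne.mpr ⟨inter_subset_left, hC⟩
    have IH2 : h (shiftDown (L ∩ M)) ≤ h (L ∩ M) := IH _ hX2ss
    have hmem : (min (h (L ∩ M')) (h (L ∩ shiftDown M'))) ∈
        {k | ∃ N : Finset ℕ, N ≠ L ∧ 0 < N.card ∧ N.card ≤ L.card ∧
        k = min (h (L ∩ N)) (h (L ∩ shiftDown N))} :=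
      ⟨M', hM'neL, by omega, by omega, rfl⟩
    refine le_trans ?_ (le_csSup hBdd hmem)
    rw [hsdM', ← hX1, ← hX2]
    exact min_le_min IH1 IH2
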